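/- arXiv:1809.03108 — 2 statements merged into one kernel-verified Lean document; each statement's English description precedes it below -/
import Mathlib

section
/- The ω-language L = Σ*(a + Σa)^ω over Σ = {a,b} — equivalently, the set of ω-words satisfying the LTL formula FG(a ∨ Xa), i.e., eventually at every position either the current or next letter is a — has a trivial right congruence (one equivalence class), and hence cannot be recognized by any one-state deterministic Muller automaton even though |∼_L| = 1; in particular, the rightcon automaton of L is not isomorphic to any ω-automaton recognizing L with a Muller condition. -/
namespace OmegaRC

variable {σ : Type*} {Q : Type*}

/-- Concatenation of a finite word with an ω-word. -/
def wcat (x : List σ) (w : ℕ → σ) : ℕ → σ :=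
  fun n => if h : n < x.length then x.get ⟨n, h⟩ else w (n - x.length)

/-- Canonical right congruence of an ω-language: `x ∼_L y`. -/
def RC (L : Set (ℕ → σ)) (x y : List σ) : Prop :=
  ∀ w : ℕ → σ, wcat x w ∈ L ↔ wcat y w ∈ L

/-- The periodic ω-word `v^ω` (for nonempty `v`). -/
def wrep [Inhabited σ] (v : List σ) : ℕ → σ :=
  fun n => v.getD (n % v.length) default

/-- Finite power `v^n` of a finite word. -/
def wpow (v : List σ) (n : ℕ) : List σ := (List.replicate n v).flatten

/-- The finite segment `w[i..j)` of an ω-word. -/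
def segment (w : ℕ → σ) (i j : ℕ) : List σ :=
  (List.range (j - i)).map (fun k => w (i + k))

/-- `R^ω`: ω-words that are infinite concatenations of (nonempty) words of `R`. -/
def omegaPow (R : Set (List σ)) : Set (ℕ → σ) :=
  { w | ∃ f : ℕ → ℕ, f 0 = 0 ∧ StrictMono f ∧ ∀ i, segment w (f i) (f (i + 1)) ∈ R }

/-- A complete deterministic transition structure. -/
structure DetAut (σ : Type*) (Q : Type*) where
  init : Q
  step : Q → σ → Q

/-- Extended transition function on finite words. -/
def DetAut.runFin (A : DetAut σ Q) (q : Q) (x : List σ) : Q := x.foldl A.step q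

/-- The run of a deterministic automaton on an ω-word. -/
def DetAut.run (A : DetAut σ Q) (w : ℕ → σ) : ℕ → Q
  | 0 => A.init
  | n + 1 => A.step (A.run w n) (w n)

/-- The set of states occurring infinitely often in a run. -/
def infSet (r : ℕ → Q) : Set Q := { q | ∀ n, ∃ m, n ≤ m ∧ r m = q }

/-- Muller acceptance. -/
def MullerAcc (A : DetAut σ Q) (acc : Set (Set Q)) (w : ℕ → σ) : Prop :=
  infSet (A.run w) ∈ acc

/-- Büchi acceptance. -/
def BuchiAcc (A : DetAut σ Q) (F : Set Q) (w : ℕ → σ) : Prop :=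
  ∀ n, ∃ m, n ≤ m ∧ A.run w m ∈ F

/-- co-Büchi acceptance. -/
def CoBuchiAcc (A : DetAut σ Q) (F : Set Q) (w : ℕ → σ) : Prop :=
  ∃ n, ∀ m, n ≤ m → A.run w m ∉ F

/-- Colors occurring infinitely often in a run. -/
def infColors (κ : Q → ℕ) (r : ℕ → Q) : Set ℕ := { c | ∀ n, ∃ m, n ≤ m ∧ κ (r m) = c }

/-- Parity (min-odd) acceptance. -/
def ParityAcc (A : DetAut σ Q) (κ : Q → ℕ) (w : ℕ → σ) : Prop :=
  ∃ c ∈ infColors κ (A.run w), (∀ c' ∈ infColors κ (A.run w), c ≤ c') ∧ Odd c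

/-- `S` is strongly connected. -/
def IsSCC (A : DetAut σ Q) (S : Set Q) : Prop :=
  ∀ s1 ∈ S, ∀ s2 ∈ S, ∃ x : List σ, x ≠ [] ∧ A.runFin s1 x = s2

/-- Transitions taken infinitely often in the run on `w`. -/
def infTrans (A : DetAut σ Q) (w : ℕ → σ) : Set (Q × σ × Q) :=
  { t | ∀ n, ∃ m, n ≤ m ∧ (A.run w m, w m, A.run w (m + 1)) = t }

/-- Transition-table (transition-based Muller) acceptance. -/
def TransAcc (A : DetAut σ Q) (acc : Set (Set (Q × σ × Q))) (w : ℕ → σ) : Prop :=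
  infTrans A w ∈ acc

/-- Non-counting ω-language. -/
def NonCounting (L : Set (ℕ → σ)) : Prop :=
  ∃ n₀ : ℕ, ∀ n > n₀, ∀ u v : List σ, ∀ w : ℕ → σ,
    (wcat (u ++ wpow v n) w ∈ L ↔ wcat (u ++ wpow v (n + 1)) w ∈ L)

/-- `L` is respective of its right congruence. -/
def Respective [Inhabited σ] (L : Set (ℕ → σ)) : Prop :=
  ∃ n₀ : ℕ, ∀ n > n₀, ∀ x u : List σ, u ≠ [] →
    wcat x (wrep u) ∈ L → RC L (x ++ wpow u n) (x ++ wpow u (n + 1))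

/-! Membership in `L` depends only on a tail of the word, so prepending a finite word never
changes it and all finite words are `∼_L`-equivalent. A one-state automaton has the whole
state set as infinity set on every run, so it accepts every word or none, whereas `L`
contains `a^ω` but not `b^ω`. -/

section PrefixIndependence

variable {σ : Type*}

theorem wcat_add_length (x : List σ) (w : ℕ → σ) (i : ℕ) : wcat x w (i + x.length) = w i := by
  simp [wcat]

def PrefixIndependent (L : Set (ℕ → σ)) : Prop :=
  ∀ (x : List σ) (w : ℕ → σ), wcat x w ∈ L ↔ w ∈ L

theorem PrefixIndependent.rc {L : Set (ℕ → σ)} (hL : PrefixIndependent L) (x y : List σ) :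
    RC L x y :=
  fun w => by rw [hL, hL]

theorem prefixIndependent_eventually_forall (p : σ → σ → Prop) :
    PrefixIndependent { w : ℕ → σ | ∃ n, ∀ i ≥ n, p (w i) (w (i + 1)) } := by
  intro x w
  constructor
  · rintro ⟨n, hn⟩
    refine ⟨n, fun i hi => ?_⟩
    have h := hn (i + x.length) (by omega)
    rwa [Nat.add_right_comm, wcat_add_length, wcat_add_length] at h
  · rintro ⟨n, hn⟩
    refine ⟨n + x.length, fun i hi => ?_⟩
    obtain ⟨j, rfl⟩ : ∃ j, i = j + x.length := ⟨i - x.length, by omega⟩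
    rw [Nat.add_right_comm, wcat_add_length, wcat_add_length]
    exact hn j (by omega)

end PrefixIndependence

section OneState

variable {σ Q : Type*} [Subsingleton Q]

theorem infSet_eq_univ_of_subsingleton (r : ℕ → Q) : infSet r = Set.univ :=
  Set.eq_univ_of_forall fun _ n => ⟨n, le_rfl, Subsingleton.elim _ _⟩

theorem mullerAcc_iff_univ_mem_of_subsingleton (A : DetAut σ Q) (acc : Set (Set Q))
    (w : ℕ → σ) : MullerAcc A acc w ↔ Set.univ ∈ acc := by
  rw [MullerAcc, infSet_eq_univ_of_subsingleton]

end OneState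

/-- `FG(a ∨ Xa)` has a trivial right congruence, yet no one-state DMA
recognizes it. -/
theorem fg_a_or_xa_trivial_rc_not_one_state_dma :
    let L : Set (ℕ → Bool) := { w | ∃ n, ∀ i ≥ n, w i = true ∨ w (i + 1) = true }
    (∀ x y : List Bool, RC L x y) ∧
    (∀ (Q : Type) (_ : Unique Q) (A : DetAut Bool Q) (acc : Set (Set Q)),
      ¬ (∀ w : ℕ → Bool, MullerAcc A acc w ↔ w ∈ L)) := by
  intro L
  refine ⟨(prefixIndependent_eventually_forall fun a b => a = true ∨ b = true).rc, ?_⟩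
  intro Q _ A acc hrec
  have all_true_mem : (fun _ => true) ∈ L := ⟨0, fun _ _ => Or.inl rfl⟩
  have all_false_mem : (fun _ => false) ∈ L :=
    (hrec _).1 <| (mullerAcc_iff_univ_mem_of_subsingleton A acc _).2 <|
      (mullerAcc_iff_univ_mem_of_subsingleton A acc _).1 <| (hrec _).2 all_true_mem
  obtain ⟨n, hn⟩ := all_false_mem
  simpa using hn n le_rfl

end OmegaRC
end

section
/- Two regular ω-languages are equal iff they contain the same ultimately periodic words: if L₁ and L₂ are recognized by deterministic Muller automata and for all finite words u and nonempty finite words v, u v^ω ∈ L₁ ↔ u v^ω ∈ L₂, then L₁ = L₂. -/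
/-!
Run the product automaton on `w`. From some position `N` on, its run stays among the states it
visits infinitely often, and some later return to the state at `N` has passed through all of them.
Pumping the segment of `w` between `N` and that return gives an ultimately periodic word on which
the product run repeats this loop forever, so it visits the same states infinitely often as on `w`.
Projecting to the two factors, each automaton accepts that word iff it accepts `w`.
-/

namespace OmegaRC

variable {σ : Type*} {Q : Type*}

open Filter Function

lemma mem_infSet_iff_frequently {r : ℕ → Q} {q : Q} :
    q ∈ infSet r ↔ ∃ᶠ n in atTop, r n = q :=
  frequently_atTop.symm

lemma infSet_comp [Finite Q] {Q' : Type*} (f : Q → Q') (r : ℕ → Q) :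
    infSet (f ∘ r) = f '' infSet r := by
  ext q'
  simp only [Set.mem_image, mem_infSet_iff_frequently]
  constructor
  · intro hq'
    have : ∃ᶠ n in atTop, ∃ q, f q = q' ∧ r n = q := hq'.mono fun n hn => ⟨r n, hn, rfl⟩
    obtain ⟨q, hq⟩ := frequently_exists.mp this
    obtain ⟨_, hfq, -⟩ := hq.exists
    exact ⟨q, hq.mono fun _ hn => hn.2, hfq⟩
  · rintro ⟨q, hq, rfl⟩
    exact hq.mono fun n hn => by simp [hn]

lemma eventually_mem_infSet [Finite Q] (r : ℕ → Q) : ∀ᶠ n in atTop, r n ∈ infSet r := by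
  have : ∀ᶠ n in atTop, ∀ q, q ∉ infSet r → r n ≠ q := by
    refine eventually_all.mpr fun q => ?_
    by_cases hq : q ∈ infSet r
    · exact Eventually.of_forall fun _ h => absurd hq h
    · rw [mem_infSet_iff_frequently, not_frequently] at hq
      exact hq.mono fun _ hn _ => hn
  exact this.mono fun n hn => by_contra fun h => hn _ h rfl

lemma infSet_eq_image_Ico_of_periodic {r : ℕ → Q} {N p : ℕ} (hp : 0 < p)
    (hr : Periodic (fun k => r (N + k)) p) : infSet r = r '' Set.Ico N (N + p) := by
  ext q
  constructor
  · intro hq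
    obtain ⟨n, hn, rfl⟩ := hq N
    refine ⟨N + (n - N) % p, ⟨by omega, by have := Nat.mod_lt (n - N) hp; omega⟩, ?_⟩
    rw [hr.map_mod_nat, Nat.add_sub_cancel' hn]
  · rintro ⟨n, ⟨hNn, -⟩, rfl⟩ m
    refine ⟨n + m * p, by nlinarith, ?_⟩
    have := (hr.nat_mul m) (n - N)
    rwa [← Nat.add_assoc, Nat.add_sub_cancel' hNn] at this

lemma exists_cycle_infSet_eq_image_Ico [Finite Q] (r : ℕ → Q) :
    ∃ N p, 0 < p ∧ r (N + p) = r N ∧ infSet r = r '' Set.Ico N (N + p) := by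
  obtain ⟨N, hN⟩ := eventually_atTop.mp (eventually_mem_infSet r)
  have hcover : ∀ᶠ K in atTop, N < K ∧ ∀ q ∈ infSet r, ∃ m ∈ Set.Ico N K, r m = q := by
    refine (eventually_gt_atTop N).and (eventually_all.mpr fun q => ?_)
    by_cases hq : q ∈ infSet r
    · obtain ⟨m, hm, rfl⟩ := hq N
      exact (eventually_gt_atTop m).mono fun K hK _ => ⟨m, ⟨hm, hK⟩, rfl⟩
    · exact Eventually.of_forall fun _ h => absurd h hq
  obtain ⟨K, hNK, hK⟩ := hcover.exists
  obtain ⟨M, hKM, hM⟩ := hN N le_rfl K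
  refine ⟨N, M - N, by omega, by rwa [Nat.add_sub_cancel' (by omega)], ?_⟩
  rw [Nat.add_sub_cancel' (by omega)]
  refine subset_antisymm (fun q hq => ?_) ?_
  · obtain ⟨m, hm, rfl⟩ := hK q hq
    exact ⟨m, ⟨hm.1, hm.2.trans_le hKM⟩, rfl⟩
  · rintro _ ⟨m, hm, rfl⟩
    exact hN m hm.1

lemma wcat_apply_of_lt (x : List σ) (w : ℕ → σ) {n : ℕ} (hn : n < x.length) :
    wcat x w n = x[n] := by
  simp [wcat, hn]

lemma wcat_apply_of_length_le (x : List σ) (w : ℕ → σ) {n : ℕ} (hn : x.length ≤ n) :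
    wcat x w n = w (n - x.length) := by
  simp [wcat, hn]

lemma wrep_apply_of_lt [Inhabited σ] {v : List σ} {k : ℕ} (hk : k < v.length) :
    wrep v k = v[k] := by
  simp [wrep, Nat.mod_eq_of_lt hk, hk]

lemma wrep_periodic [Inhabited σ] (v : List σ) : Periodic (wrep v) v.length := fun n => by
  simp [wrep]

@[simp]
lemma segment_length (w : ℕ → σ) (i j : ℕ) : (segment w i j).length = j - i := by
  simp [segment]

@[simp]
lemma segment_getElem (w : ℕ → σ) (i j k : ℕ) (hk : k < (segment w i j).length) :
    (segment w i j)[k] = w (i + k) := by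
  simp [segment]

lemma wcat_segment_wrep_of_lt [Inhabited σ] (w : ℕ → σ) {N p n : ℕ} (hn : n < N + p) :
    wcat (segment w 0 N) (wrep (segment w N (N + p))) n = w n := by
  by_cases hnN : n < N
  · rw [wcat_apply_of_lt _ _ (by simpa using hnN), segment_getElem, Nat.zero_add]
  · rw [wcat_apply_of_length_le _ _ (by simpa using hnN), wrep_apply_of_lt (by simp; omega)]
    simp [Nat.add_sub_cancel' (not_lt.mp hnN)]

lemma wcat_segment_wrep_periodic [Inhabited σ] (w : ℕ → σ) (N p : ℕ) :
    Periodic (fun k => wcat (segment w 0 N) (wrep (segment w N (N + p))) (N + k)) p := by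
  have hper := wrep_periodic (segment w N (N + p))
  simp only [segment_length, Nat.add_sub_cancel_left] at hper
  intro k
  simp only [wcat_apply_of_length_le _ _ (by simp : (segment w 0 N).length ≤ N + _),
    segment_length, Nat.sub_zero, Nat.add_sub_cancel_left]
  exact hper k

def DetAut.prod {Q₁ Q₂ : Type*} (A₁ : DetAut σ Q₁) (A₂ : DetAut σ Q₂) : DetAut σ (Q₁ × Q₂) :=
  ⟨(A₁.init, A₂.init), fun q a => (A₁.step q.1 a, A₂.step q.2 a)⟩

lemma DetAut.run_prod {Q₁ Q₂ : Type*} (A₁ : DetAut σ Q₁) (A₂ : DetAut σ Q₂) (w : ℕ → σ) :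
    ∀ n, (A₁.prod A₂).run w n = (A₁.run w n, A₂.run w n)
  | 0 => rfl
  | n + 1 => by simp only [DetAut.run, DetAut.run_prod A₁ A₂ w n]; rfl

lemma DetAut.run_congr (A : DetAut σ Q) {w w' : ℕ → σ} :
    ∀ {n}, (∀ k < n, w k = w' k) → A.run w n = A.run w' n
  | 0, _ => rfl
  | n + 1, h => by
    simp only [DetAut.run]
    rw [A.run_congr fun k hk => h k (by omega), h n n.lt_succ_self]

lemma DetAut.run_periodic (A : DetAut σ Q) {w : ℕ → σ} {N p : ℕ}
    (hw : Periodic (fun k => w (N + k)) p) (hr : A.run w (N + p) = A.run w N) :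
    Periodic (fun k => A.run w (N + k)) p := by
  intro k
  induction k with
  | zero => simpa using hr
  | succ k ih =>
    have hwk : w (N + (k + p)) = w (N + k) := hw k
    change A.run w (N + (k + p)) = A.run w (N + k) at ih
    change A.run w (N + (k + 1 + p)) = A.run w (N + (k + 1))
    rw [show N + (k + 1 + p) = N + (k + p) + 1 by omega]
    exact congrArg₂ A.step ih hwk

lemma DetAut.exists_wcat_wrep_infSet_run_eq [Finite Q] [Inhabited σ] (A : DetAut σ Q) (w : ℕ → σ) :
    ∃ u v : List σ, v ≠ [] ∧ infSet (A.run (wcat u (wrep v))) = infSet (A.run w) := by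
  obtain ⟨N, p, hp, hcycle, hinf⟩ := exists_cycle_infSet_eq_image_Ico (A.run w)
  set w' := wcat (segment w 0 N) (wrep (segment w N (N + p)))
  have hagree : ∀ n ≤ N + p, A.run w' n = A.run w n := fun n hn =>
    A.run_congr fun k hk => wcat_segment_wrep_of_lt w (by omega)
  have hper : Periodic (fun k => A.run w' (N + k)) p :=
    A.run_periodic (wcat_segment_wrep_periodic w N p)
      (by rw [hagree _ le_rfl, hagree _ (by omega), hcycle])
  refine ⟨segment w 0 N, segment w N (N + p), ?_, ?_⟩
  · simpa [← List.length_pos_iff] using hp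
  · rw [infSet_eq_image_Ico_of_periodic hp hper, hinf]
    exact Set.image_congr fun n hn => hagree n hn.2.le

/-- two DMA-recognizable ω-languages agreeing on all ultimately periodic
words are equal. -/
theorem up_words_determine_regular {σ Q1 Q2 : Type*} [Inhabited σ] [Fintype Q1] [Fintype Q2]
    (A1 : DetAut σ Q1) (A2 : DetAut σ Q2) (acc1 : Set (Set Q1)) (acc2 : Set (Set Q2))
    (h : ∀ (u v : List σ), v ≠ [] →
      (MullerAcc A1 acc1 (wcat u (wrep v)) ↔ MullerAcc A2 acc2 (wcat u (wrep v)))) :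
    ∀ w : ℕ → σ, MullerAcc A1 acc1 w ↔ MullerAcc A2 acc2 w := by
  intro w
  obtain ⟨u, v, hv, hinf⟩ := (A1.prod A2).exists_wcat_wrep_infSet_run_eq w
  have hfst : ∀ w, A1.run w = Prod.fst ∘ (A1.prod A2).run w := fun w =>
    funext fun n => by simp [DetAut.run_prod]
  have hsnd : ∀ w, A2.run w = Prod.snd ∘ (A1.prod A2).run w := fun w =>
    funext fun n => by simp [DetAut.run_prod]
  simpa only [MullerAcc, hfst, hsnd, infSet_comp, hinf] using h u v hv

end OmegaRC
end
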